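/- arXiv:1802.02746 — 2 statements merged into one kernel-verified Lean document; each statement's English description precedes it below -/
import Mathlib

section
/- Let A be an m×n real matrix and let B be any nonsingular k×k submatrix of A (k ≤ min(m,n)). Then ‖B⁻¹‖_C ≥ 1/(k·σ_k(A)). -/
open Matrix

/-- The maximum absolute entry norm `‖·‖_C` of a matrix. -/
noncomputable def cnorm {m n : Type*} [Fintype m] [Fintype n]
    (M : Matrix m n ℝ) : ℝ := ⨆ i, ⨆ j, |M i j|

/-- The `k`-th largest value (1-indexed) of a finite family of reals. -/
noncomputable def kthLargest {ι : Type*} [Fintype ι] (f : ι → ℝ) (k : ℕ) : ℝ :=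
  ((Finset.univ.val.map f).sort (· ≤ ·)).getD (Fintype.card ι - k) 0

/-- The `k`-th largest singular value (1-indexed) of a real matrix,
i.e. the square root of the `k`-th largest eigenvalue of `Aᴴ * A`. -/
noncomputable def singularValue {m n : Type*} [Fintype m] [Fintype n] [DecidableEq n]
    (A : Matrix m n ℝ) (k : ℕ) : ℝ :=
  Real.sqrt (kthLargest (Matrix.isHermitian_conjTranspose_mul_self A).eigenvalues k)

/-!
Let `λ` be the `k`-th largest eigenvalue of `Aᵀ A`. Fewer than `k` eigenvectors have eigenvalue
above `λ`, so the `k`-dimensional space of vectors supported on the columns `c` contains some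
`x ≠ 0` orthogonal to all of them (Courant–Fischer), whence `‖A x‖₂² ≤ λ ‖x‖₂²`. Writing
`x = P a` with `P` the column selection and dropping the rows outside `r`, the submatrix `B`
satisfies `‖B a‖₂ ≤ σ_k(A) ‖a‖₂`. Then `a = B⁻¹ (B a)` gives
`‖a‖_∞ ≤ ‖B⁻¹‖_C ‖B a‖₁ ≤ ‖B⁻¹‖_C √k ‖B a‖₂ ≤ ‖B⁻¹‖_C √k σ_k(A) ‖a‖₂ ≤ ‖B⁻¹‖_C k σ_k(A) ‖a‖_∞`.
-/

open Finset Function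

lemma abs_le_cnorm {m n : Type*} [Fintype m] [Fintype n] (M : Matrix m n ℝ) (i : m) (j : n) :
    |M i j| ≤ cnorm M :=
  (le_ciSup (f := fun j => |M i j|) (Set.finite_range _).bddAbove j).trans
    (le_ciSup (f := fun i => ⨆ j, |M i j|) (Set.finite_range _).bddAbove i)

lemma cnorm_nonneg {m n : Type*} [Fintype m] [Fintype n] (M : Matrix m n ℝ) : 0 ≤ cnorm M :=
  Real.iSup_nonneg fun _ => Real.iSup_nonneg fun _ => abs_nonneg _

lemma abs_mulVec_apply_le_cnorm_mul_sum_abs {m n : Type*} [Fintype m] [Fintype n]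
    (M : Matrix m n ℝ) (v : n → ℝ) (i : m) : |(M *ᵥ v) i| ≤ cnorm M * ∑ j, |v j| :=
  calc |(M *ᵥ v) i| ≤ ∑ j, |M i j * v j| := abs_sum_le_sum_abs _ _
    _ ≤ ∑ j, cnorm M * |v j| := sum_le_sum fun j _ => by
        rw [abs_mul]; exact mul_le_mul_of_nonneg_right (abs_le_cnorm M i j) (abs_nonneg _)
    _ = cnorm M * ∑ j, |v j| := (mul_sum _ _ _).symm

lemma card_filter_kthLargest_lt_lt {ι : Type*} [Fintype ι] (f : ι → ℝ) {k : ℕ} (hk : 1 ≤ k)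
    (hkι : k ≤ Fintype.card ι) : #{i | kthLargest f k < f i} < k := by
  set N := Fintype.card ι
  set l := (univ.val.map f).sort (· ≤ ·)
  have hlen : l.length = N := by simp [l, N]
  have hidx : N - k < l.length := by omega
  have hkth : kthLargest f k = l[N - k] := List.getD_eq_getElem _ _ hidx
  have hcount : #{i | kthLargest f k < f i} = l.countP (kthLargest f k < ·) := by
    rw [← Multiset.coe_countP, Multiset.sort_eq, Multiset.countP_map]; rfl
  have hsorted : l.Pairwise (· ≤ ·) := Multiset.pairwise_sort _ _
  have htake : (l.take (N - k + 1)).countP (kthLargest f k < ·) = 0 := by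
    refine List.countP_eq_zero.mpr fun x hx => ?_
    obtain ⟨i, hi, rfl⟩ := List.mem_take_iff_getElem.mp hx
    have := hsorted.rel_get_of_le
      (a := ⟨i, by omega⟩) (b := ⟨N - k, hidx⟩) (Fin.mk_le_mk.mpr (by omega))
    simpa [hkth] using this
  rw [hcount, ← List.take_append_drop (N - k + 1) l, List.countP_append, htake]
  have := List.countP_le_length (p := (kthLargest f k < ·)) (l := l.drop (N - k + 1))
  simp only [List.length_drop] at this
  omega

lemma OrthonormalBasis.dotProduct_eq_sum {ι n : Type*} [Fintype ι] [Fintype n]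
    (b : OrthonormalBasis ι ℝ (EuclideanSpace ℝ n)) (v w : n → ℝ) :
    v ⬝ᵥ w = ∑ j, (⇑(b j) ⬝ᵥ v) * (⇑(b j) ⬝ᵥ w) := by
  have := b.sum_inner_mul_inner (WithLp.toLp 2 v) (WithLp.toLp 2 w)
  simp only [EuclideanSpace.inner_eq_star_dotProduct, star_trivial] at this
  simpa [dotProduct_comm] using this.symm

namespace Matrix.IsHermitian

variable {n : Type*} [Fintype n] [DecidableEq n] {M : Matrix n n ℝ} (hM : M.IsHermitian)

lemma dotProduct_mulVec_eq_sum (x : n → ℝ) :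
    x ⬝ᵥ M *ᵥ x = ∑ j, hM.eigenvalues j * (⇑(hM.eigenvectorBasis j) ⬝ᵥ x) ^ 2 := by
  rw [hM.eigenvectorBasis.dotProduct_eq_sum]
  refine sum_congr rfl fun j _ => ?_
  have hsymm : ⇑(hM.eigenvectorBasis j) ⬝ᵥ M *ᵥ x = (M *ᵥ ⇑(hM.eigenvectorBasis j)) ⬝ᵥ x := by
    rw [dotProduct_mulVec, ← mulVec_transpose, ← conjTranspose_eq_transpose_of_trivial, hM.eq]
  rw [hsymm, hM.mulVec_eigenvectorBasis, smul_dotProduct, smul_eq_mul]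
  ring

lemma dotProduct_mulVec_le_of_forall_lt_eigenvalues {t : ℝ} {x : n → ℝ}
    (hx : ∀ j, t < hM.eigenvalues j → ⇑(hM.eigenvectorBasis j) ⬝ᵥ x = 0) :
    x ⬝ᵥ M *ᵥ x ≤ t * (x ⬝ᵥ x) := by
  rw [hM.dotProduct_mulVec_eq_sum, hM.eigenvectorBasis.dotProduct_eq_sum, mul_sum]
  refine sum_le_sum fun j _ => ?_
  rcases le_or_gt (hM.eigenvalues j) t with hj | hj
  · rw [← sq]; exact mul_le_mul_of_nonneg_right hj (sq_nonneg _)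
  · simp [hx j hj]

theorem exists_ne_zero_dotProduct_mulVec_le_kthLargest {k : ℕ} (hk : 1 ≤ k)
    (V : Submodule ℝ (n → ℝ)) (hV : k ≤ Module.finrank ℝ V) :
    ∃ x ∈ V, x ≠ 0 ∧ x ⬝ᵥ M *ᵥ x ≤ kthLargest hM.eigenvalues k * (x ⬝ᵥ x) := by
  set t := kthLargest hM.eigenvalues k
  let f : V →ₗ[ℝ] {j // t < hM.eigenvalues j} → ℝ :=
    (of fun (j : {j // t < hM.eigenvalues j}) => ⇑(hM.eigenvectorBasis j)).mulVecLin ∘ₗ V.subtype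
  have hkn : k ≤ Fintype.card n := hV.trans (by simpa using V.finrank_le)
  have hcard : Fintype.card {j // t < hM.eigenvalues j} < k := by
    simpa [Fintype.card_subtype] using card_filter_kthLargest_lt_lt hM.eigenvalues hk hkn
  obtain ⟨⟨x, hxV⟩, hxf, hx0⟩ :=
    Submodule.exists_mem_ne_zero_of_ne_bot
      (f.ker_ne_bot_of_finrank_lt (by simpa using hcard.trans_le hV))
  exact ⟨x, hxV, by simpa using hx0,
    hM.dotProduct_mulVec_le_of_forall_lt_eigenvalues fun j hj => congr_fun hxf ⟨j, hj⟩⟩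

end Matrix.IsHermitian

theorem exists_ne_zero_submatrix_mulVec_le_singularValue {m n ι : Type*} [Fintype m] [Fintype n]
    [DecidableEq n] [Fintype ι] [Nonempty ι] (A : Matrix m n ℝ) {c : ι → n} (hc : Injective c) :
    ∃ a ≠ 0, (A.submatrix id c *ᵥ a) ⬝ᵥ (A.submatrix id c *ᵥ a)
      ≤ singularValue A (Fintype.card ι) ^ 2 * (a ⬝ᵥ a) := by
  classical
  set P : Matrix n ι ℝ := (1 : Matrix n n ℝ).submatrix id c
  have hPP : Pᵀ * P = 1 := by
    rw [transpose_submatrix, transpose_one, ← submatrix_mul _ _ _ _ _ bijective_id, one_mul,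
      submatrix_one c hc]
  have hPa (a : ι → ℝ) : (P *ᵥ a) ⬝ᵥ (P *ᵥ a) = a ⬝ᵥ a := by
    rw [dotProduct_comm, dotProduct_mulVec, ← mulVec_transpose, mulVec_mulVec, hPP, one_mulVec]
  have hinj : Injective P.mulVecLin := fun a b hab => by
    simpa [hPP] using congr_arg (Pᵀ *ᵥ ·) hab
  obtain ⟨x, ⟨a, rfl⟩, hx0, hx⟩ :=
    (isHermitian_conjTranspose_mul_self A).exists_ne_zero_dotProduct_mulVec_le_kthLargest
      (Fintype.card_pos (α := ι)) (LinearMap.range P.mulVecLin)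
      (by rw [LinearMap.finrank_range_of_inj hinj, Module.finrank_fintype_fun_eq_card])
  refine ⟨a, fun ha => hx0 (by simp [ha]), ?_⟩
  have hAP : A * P = A.submatrix id c := mul_submatrix_one (Equiv.refl n) c A
  have hAx (x : n → ℝ) : x ⬝ᵥ (Aᴴ * A) *ᵥ x = (A *ᵥ x) ⬝ᵥ (A *ᵥ x) := by
    rw [← mulVec_mulVec, dotProduct_mulVec, conjTranspose_eq_transpose_of_trivial,
      vecMul_transpose, dotProduct_comm]
  set t := kthLargest (isHermitian_conjTranspose_mul_self A).eigenvalues (Fintype.card ι)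
  have ht : t ≤ Real.sqrt t ^ 2 := by
    rcases le_total 0 t with h | h
    · rw [Real.sq_sqrt h]
    · exact h.trans (sq_nonneg _)
  rw [mulVecLin_apply, hAx, mulVec_mulVec, hAP, hPa] at hx
  exact hx.trans (mul_le_mul_of_nonneg_right ht (dotProduct_self_star_nonneg a))

lemma dotProduct_self_comp_le {m ι : Type*} [Fintype m] [Fintype ι] (v : m → ℝ) {r : ι → m}
    (hr : Injective r) : (v ∘ r) ⬝ᵥ (v ∘ r) ≤ v ⬝ᵥ v := by
  simpa [dotProduct] using
    sum_le_univ_sum_of_nonneg (s := univ.map ⟨r, hr⟩) fun p => mul_self_nonneg (v p)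

lemma one_le_card_mul_mul_cnorm_inv {ι : Type*} [Fintype ι] [DecidableEq ι] {B : Matrix ι ι ℝ}
    (hB : IsUnit B.det) {a : ι → ℝ} (ha : a ≠ 0) {s : ℝ} (hs : 0 ≤ s)
    (h : (B *ᵥ a) ⬝ᵥ (B *ᵥ a) ≤ s ^ 2 * (a ⬝ᵥ a)) :
    1 ≤ (Fintype.card ι : ℝ) * s * cnorm B⁻¹ := by
  set k : ℝ := (Fintype.card ι : ℝ)
  set C := cnorm B⁻¹
  set w := B *ᵥ a
  have hC : 0 ≤ C := cnorm_nonneg _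
  have hinf : ‖a‖ ≤ C * ∑ j, |w j| := by
    refine (pi_norm_le_iff_of_nonneg (by positivity)).mpr fun i => ?_
    have : a = B⁻¹ *ᵥ w := by rw [mulVec_mulVec, nonsing_inv_mul _ hB, one_mulVec]
    rw [Real.norm_eq_abs, this]
    exact abs_mulVec_apply_le_cnorm_mul_sum_abs _ _ _
  have hl1 : (∑ j, |w j|) ^ 2 ≤ k * (w ⬝ᵥ w) := by
    simpa [dotProduct, sq] using sq_sum_le_card_mul_sum_sq (s := univ) (f := fun j => |w j|)
  have hl2 : a ⬝ᵥ a ≤ k * ‖a‖ ^ 2 :=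
    calc a ⬝ᵥ a = ∑ i, ‖a i‖ ^ 2 := by simp [dotProduct, sq]
      _ ≤ ∑ _i : ι, ‖a‖ ^ 2 := sum_le_sum fun i _ => by gcongr; exact norm_le_pi_norm a i
      _ = k * ‖a‖ ^ 2 := by simp [k]
  have hchain : 1 * ‖a‖ ^ 2 ≤ (k * s * C) ^ 2 * ‖a‖ ^ 2 :=
    calc 1 * ‖a‖ ^ 2 ≤ C ^ 2 * (∑ j, |w j|) ^ 2 := by
          rw [one_mul, ← mul_pow]; gcongr
      _ ≤ C ^ 2 * (k * (s ^ 2 * (a ⬝ᵥ a))) := by gcongr; exact hl1.trans (by gcongr)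
      _ ≤ C ^ 2 * (k * (s ^ 2 * (k * ‖a‖ ^ 2))) := by gcongr
      _ = (k * s * C) ^ 2 * ‖a‖ ^ 2 := by ring
  have hsq := le_of_mul_le_mul_right hchain (pow_pos (norm_pos_iff.mpr ha) 2)
  rwa [one_le_sq_iff_one_le_abs, abs_of_nonneg (by positivity)] at hsq

/-- For any nonsingular `k × k` submatrix `B` of an `m × n` real matrix `A`,
`‖B⁻¹‖_C ≥ 1 / (k * σ_k(A))`. -/
theorem cnorm_inv_submatrix_ge {m n k : ℕ} (A : Matrix (Fin m) (Fin n) ℝ)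
    (r : Fin k → Fin m) (c : Fin k → Fin n)
    (hr : Function.Injective r) (hc : Function.Injective c)
    (hB : IsUnit (A.submatrix r c).det) :
    cnorm (A.submatrix r c)⁻¹ ≥ 1 / (k * singularValue A k) := by
  rcases Nat.eq_zero_or_pos k with rfl | hk
  · simpa using cnorm_nonneg _
  have : Nonempty (Fin k) := ⟨⟨0, hk⟩⟩
  obtain ⟨a, ha, hAa⟩ := exists_ne_zero_submatrix_mulVec_le_singularValue A hc
  rw [Fintype.card_fin] at hAa
  have hBa : (A.submatrix r c *ᵥ a) ⬝ᵥ (A.submatrix r c *ᵥ a)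
      ≤ singularValue A k ^ 2 * (a ⬝ᵥ a) :=
    (dotProduct_self_comp_le (A.submatrix id c *ᵥ a) hr).trans hAa
  have key := one_le_card_mul_mul_cnorm_inv hB ha (Real.sqrt_nonneg _) hBa
  rw [Fintype.card_fin] at key
  exact div_le_of_le_mul₀ (mul_nonneg k.cast_nonneg (Real.sqrt_nonneg _)) (cnorm_nonneg _)
    (key.trans_eq (mul_comm _ _))
end

section
/- Let A be an m×n real matrix partitioned as A = [[A₁₁, A₁₂],[A₂₁, A₂₂]] with A₁₁ a nonsingular k×k block, k < min(m,n), having local ρ-maximum volume in A for some ρ ≥ 1. Then σ_{k+1}(A) ≤ ‖A/A₁₁‖₂ ≤ ρ(k+1)√((m−k)(n−k))·σ_{k+1}(A), where ‖·‖₂ denotes the spectral norm (largest singular value). -/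
open Matrix

/-!
For the lower bound, `A` minus the rank-`k` matrix `[1; A₂₁A₁₁⁻¹] * [A₁₁ A₁₂]` is
`fromBlocks 0 0 0 (A/A₁₁)`, so by Courant–Fischer `σ_{k+1}(A) ≤ σ₁(A/A₁₁)`.

For the upper bound, fix an entry `s = (A/A₁₁) p q` and let `Â` be the `(k+1)×(k+1)` submatrix
of `A` bordering `A₁₁` with row `p` and column `q`. Then `det Â = det A₁₁ * s`, and local maximality bounds
the `k×k` minors of `Â`, i.e. the entries of `adjugate Â`, by `ρ |det A₁₁|`; so every entry of `Â⁻¹`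
is at most `ρ / |s|`. Hence `σ_min(Â) ≥ |s| / (ρ (k+1))`, and by interlacing
`σ_{k+1}(A) ≥ σ_min(Â)`. Finally `‖A/A₁₁‖₂ ≤ √((m-k)(n-k)) · max |s|`.
-/

lemma kthLargest_comp_equiv_of_antitone {ι : Type*} [Fintype ι] {g : Fin (Fintype.card ι) → ℝ}
    (hg : Antitone g) (e : ι ≃ Fin (Fintype.card ι)) (j : ℕ) (hj : j < Fintype.card ι) :
    kthLargest (g ∘ e) (j + 1) = g ⟨j, hj⟩ := by
  have hsort : (Finset.univ.val.map (g ∘ e)).sort (· ≤ ·) = List.ofFn (g ∘ Fin.rev) := by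
    rw [← Multiset.map_map, Multiset.map_univ_val_equiv, ← Multiset.map_univ_val_equiv Fin.revPerm,
      Multiset.map_map, Fin.univ_val_map, Multiset.coe_sort]
    exact List.mergeSort_eq_self _
      (List.pairwise_ofFn.2 fun a b hab => hg (Fin.rev_le_rev.2 hab.le))
  rw [kthLargest, hsort, List.getD_eq_getElem _ _ (by simp; omega), List.getElem_ofFn]
  simp only [Function.comp_apply]
  congr 1
  ext
  simp only [Fin.val_rev]
  omega


namespace Matrix.IsHermitian

variable {ι : Type*} [Fintype ι] [DecidableEq ι] {H : Matrix ι ι ℝ} (hH : H.IsHermitian)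

lemma eigenvalues_equivOfCardEq (t : Fin (Fintype.card ι)) :
    hH.eigenvalues (Fintype.equivOfCardEq (Fintype.card_fin _) t) = hH.eigenvalues₀ t := by
  simp [eigenvalues]

lemma kthLargest_eigenvalues (j : ℕ) (hj : j < Fintype.card ι) :
    kthLargest hH.eigenvalues (j + 1) = hH.eigenvalues₀ ⟨j, hj⟩ :=
  kthLargest_comp_equiv_of_antitone hH.eigenvalues₀_antitone _ j hj

lemma eigenvectorUnitary_mulVec_star_mulVec (x : ι → ℝ) :
    (hH.eigenvectorUnitary : Matrix ι ι ℝ) *ᵥ (star (hH.eigenvectorUnitary : Matrix ι ι ℝ) *ᵥ x) =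
      x := by
  rw [mulVec_mulVec, Unitary.mul_star_self_of_mem hH.eigenvectorUnitary.2, one_mulVec]

lemma eigenvectorUnitary_mulVec_dotProduct (a b : ι → ℝ) :
    ((hH.eigenvectorUnitary : Matrix ι ι ℝ) *ᵥ a) ⬝ᵥ b =
      a ⬝ᵥ (star (hH.eigenvectorUnitary : Matrix ι ι ℝ) *ᵥ b) := by
  rw [star_eq_conjTranspose, conjTranspose_eq_transpose_of_trivial, mulVec_transpose,
    dotProduct_comm, dotProduct_mulVec, dotProduct_comm]

lemma dotProduct_self_eq_sum_sq (x : ι → ℝ) :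
    x ⬝ᵥ x = ∑ i, (star (hH.eigenvectorUnitary : Matrix ι ι ℝ) *ᵥ x) i ^ 2 := by
  conv_lhs => rw [← hH.eigenvectorUnitary_mulVec_star_mulVec x,
    eigenvectorUnitary_mulVec_dotProduct, eigenvectorUnitary_mulVec_star_mulVec]
  simp only [dotProduct, sq]

lemma dotProduct_mulVec_eq_sum_eigenvalues (x : ι → ℝ) :
    x ⬝ᵥ (H *ᵥ x) =
      ∑ i, hH.eigenvalues i * (star (hH.eigenvectorUnitary : Matrix ι ι ℝ) *ᵥ x) i ^ 2 := by
  set U : Matrix ι ι ℝ := (hH.eigenvectorUnitary : Matrix ι ι ℝ)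
  have hD : star U * H * U = diagonal hH.eigenvalues := by
    simpa [Unitary.conjStarAlgAut_star_apply] using hH.conjStarAlgAut_star_eigenvectorUnitary
  have hx := hH.eigenvectorUnitary_mulVec_star_mulVec x
  calc x ⬝ᵥ (H *ᵥ x) = (star U *ᵥ x) ⬝ᵥ ((star U * H * U) *ᵥ (star U *ᵥ x)) := by
        rw [← mulVec_mulVec, ← mulVec_mulVec, hx, ← eigenvectorUnitary_mulVec_dotProduct, hx]
    _ = _ := by
        rw [hD]
        simp only [dotProduct, mulVec_diagonal]
        exact Finset.sum_congr rfl fun i _ => by ring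

lemma mul_dotProduct_self_le_of_eigenvalues_lt {c : ℝ} {x : ι → ℝ}
    (hx : ∀ i, hH.eigenvalues i < c → (star (hH.eigenvectorUnitary : Matrix ι ι ℝ) *ᵥ x) i = 0) :
    c * (x ⬝ᵥ x) ≤ x ⬝ᵥ (H *ᵥ x) := by
  rw [hH.dotProduct_mulVec_eq_sum_eigenvalues, hH.dotProduct_self_eq_sum_sq, Finset.mul_sum]
  refine Finset.sum_le_sum fun i _ => ?_
  by_cases hi : hH.eigenvalues i < c
  · simp [hx i hi]
  · exact mul_le_mul_of_nonneg_right (not_lt.1 hi) (sq_nonneg _)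

lemma dotProduct_mulVec_le_of_lt_eigenvalues {c : ℝ} {x : ι → ℝ}
    (hx : ∀ i, c < hH.eigenvalues i → (star (hH.eigenvectorUnitary : Matrix ι ι ℝ) *ᵥ x) i = 0) :
    x ⬝ᵥ (H *ᵥ x) ≤ c * (x ⬝ᵥ x) := by
  rw [hH.dotProduct_mulVec_eq_sum_eigenvalues, hH.dotProduct_self_eq_sum_sq, Finset.mul_sum]
  refine Finset.sum_le_sum fun i _ => ?_
  by_cases hi : c < hH.eigenvalues i
  · simp [hx i hi]
  · exact mul_le_mul_of_nonneg_right (not_lt.1 hi) (sq_nonneg _)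

lemma dotProduct_mulVec_le_eigenvalues₀_zero (h : 0 < Fintype.card ι) (x : ι → ℝ) :
    x ⬝ᵥ (H *ᵥ x) ≤ hH.eigenvalues₀ ⟨0, h⟩ * (x ⬝ᵥ x) := by
  refine hH.dotProduct_mulVec_le_of_lt_eigenvalues fun i hi => absurd hi (not_lt.2 ?_)
  obtain ⟨t, rfl⟩ := (Fintype.equivOfCardEq (Fintype.card_fin _)).surjective i
  rw [eigenvalues_equivOfCardEq]
  exact hH.eigenvalues₀_antitone (show (⟨0, h⟩ : Fin _) ≤ t from Nat.zero_le _)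

lemma eigenvalues₀_le_of_forall_mem {k : ℕ} (hk : k < Fintype.card ι) (V : Submodule ℝ (ι → ℝ))
    (hV : Fintype.card ι ≤ Module.finrank ℝ V + k) {c : ℝ}
    (hc : ∀ x ∈ V, x ⬝ᵥ (H *ᵥ x) ≤ c * (x ⬝ᵥ x)) :
    hH.eigenvalues₀ ⟨k, hk⟩ ≤ c := by
  set e := Fintype.equivOfCardEq (Fintype.card_fin (Fintype.card ι))
  set U : Matrix ι ι ℝ := (hH.eigenvectorUnitary : Matrix ι ι ℝ)
  let tail : Fin (Fintype.card ι - (k + 1)) → ι := fun s => e ⟨k + 1 + s, by omega⟩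
  let L : V →ₗ[ℝ] Fin (Fintype.card ι - (k + 1)) → ℝ :=
    LinearMap.funLeft ℝ ℝ tail ∘ₗ (star U).mulVecLin ∘ₗ V.subtype
  obtain ⟨⟨x, hxV⟩, hxL, hne⟩ := Submodule.exists_mem_ne_zero_of_ne_bot <|
    L.ker_ne_bot_of_finrank_lt (by simp only [Module.finrank_fin_fun]; omega)
  have hx0 : x ≠ 0 := fun h => hne (by simp [h])
  have hlow : hH.eigenvalues₀ ⟨k, hk⟩ * (x ⬝ᵥ x) ≤ x ⬝ᵥ (H *ᵥ x) := by
    refine hH.mul_dotProduct_self_le_of_eigenvalues_lt fun i hi => ?_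
    obtain ⟨t, rfl⟩ := e.surjective i
    rw [eigenvalues_equivOfCardEq] at hi
    have hkt : k + 1 ≤ t := not_lt.1 fun ht =>
      hi.not_ge (hH.eigenvalues₀_antitone (Fin.mk_le_mk.2 (by omega)))
    simpa [L, tail, show k + 1 + (t - (k + 1)) = (t : ℕ) by omega] using
      congrFun hxL ⟨t - (k + 1), by omega⟩
  have hpos : 0 < x ⬝ᵥ x := by simpa using dotProduct_star_self_pos_iff.2 hx0
  exact le_of_mul_le_mul_right (hlow.trans (hc x hxV)) hpos

lemma le_eigenvalues₀_of_forall_mem {k : ℕ} (hk : k < Fintype.card ι) (V : Submodule ℝ (ι → ℝ))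
    (hV : k + 1 ≤ Module.finrank ℝ V) {c : ℝ}
    (hc : ∀ x ∈ V, c * (x ⬝ᵥ x) ≤ x ⬝ᵥ (H *ᵥ x)) :
    c ≤ hH.eigenvalues₀ ⟨k, hk⟩ := by
  set e := Fintype.equivOfCardEq (Fintype.card_fin (Fintype.card ι))
  set U : Matrix ι ι ℝ := (hH.eigenvectorUnitary : Matrix ι ι ℝ)
  let head : Fin k → ι := fun s => e ⟨s, by omega⟩
  let L : V →ₗ[ℝ] Fin k → ℝ := LinearMap.funLeft ℝ ℝ head ∘ₗ (star U).mulVecLin ∘ₗ V.subtype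
  obtain ⟨⟨x, hxV⟩, hxL, hne⟩ := Submodule.exists_mem_ne_zero_of_ne_bot <|
    L.ker_ne_bot_of_finrank_lt (by simp only [Module.finrank_fin_fun]; omega)
  have hx0 : x ≠ 0 := fun h => hne (by simp [h])
  have hup : x ⬝ᵥ (H *ᵥ x) ≤ hH.eigenvalues₀ ⟨k, hk⟩ * (x ⬝ᵥ x) := by
    refine hH.dotProduct_mulVec_le_of_lt_eigenvalues fun i hi => ?_
    obtain ⟨t, rfl⟩ := e.surjective i
    rw [eigenvalues_equivOfCardEq] at hi
    have htk : (t : ℕ) < k := not_le.1 fun ht =>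
      hi.not_ge (hH.eigenvalues₀_antitone (Fin.mk_le_mk.2 ht))
    simpa [L, head] using congrFun hxL ⟨t, htk⟩
  have hpos : 0 < x ⬝ᵥ x := by simpa using dotProduct_star_self_pos_iff.2 hx0
  exact le_of_mul_le_mul_right ((hc x hxV).trans hup) hpos

end Matrix.IsHermitian

lemma dotProduct_conjTranspose_mul_self_mulVec {m n : Type*} [Fintype m] [Fintype n]
    (A : Matrix m n ℝ) (x : n → ℝ) : x ⬝ᵥ ((Aᴴ * A) *ᵥ x) = (A *ᵥ x) ⬝ᵥ (A *ᵥ x) := by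
  rw [← mulVec_mulVec, dotProduct_mulVec, conjTranspose_eq_transpose_of_trivial, vecMul_transpose]

section SingularValues

variable {m n : Type*} [Fintype m] [Fintype n] [DecidableEq n]

lemma singularValue_nonneg (A : Matrix m n ℝ) (k : ℕ) : 0 ≤ singularValue A k :=
  Real.sqrt_nonneg _

lemma singularValue_succ_eq_sqrt (A : Matrix m n ℝ) {k : ℕ} (hk : k < Fintype.card n) :
    singularValue A (k + 1) =
      √((isHermitian_conjTranspose_mul_self A).eigenvalues₀ ⟨k, hk⟩) := by
  rw [singularValue, IsHermitian.kthLargest_eigenvalues]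

lemma dotProduct_mulVec_self_le_singularValue_one_sq [Nonempty n] (A : Matrix m n ℝ)
    (x : n → ℝ) : (A *ᵥ x) ⬝ᵥ (A *ᵥ x) ≤ singularValue A 1 ^ 2 * (x ⬝ᵥ x) := by
  have hn : 0 < Fintype.card n := Fintype.card_pos
  have hH := isHermitian_conjTranspose_mul_self A
  rw [singularValue_succ_eq_sqrt A hn, Real.sq_sqrt, ← dotProduct_conjTranspose_mul_self_mulVec]
  · exact hH.dotProduct_mulVec_le_eigenvalues₀_zero hn x
  · rw [← hH.eigenvalues_equivOfCardEq]
    exact (posSemidef_conjTranspose_mul_self A).eigenvalues_nonneg _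

lemma singularValue_succ_le_of_rank_le (A X : Matrix m n ℝ) {k : ℕ} (hk : k < Fintype.card n)
    (hX : X.rank ≤ k) {c : ℝ} (hc : 0 ≤ c)
    (h : ∀ x, X *ᵥ x = 0 → (A *ᵥ x) ⬝ᵥ (A *ᵥ x) ≤ c ^ 2 * (x ⬝ᵥ x)) :
    singularValue A (k + 1) ≤ c := by
  rw [singularValue_succ_eq_sqrt A hk, Real.sqrt_le_left hc]
  refine (isHermitian_conjTranspose_mul_self A).eigenvalues₀_le_of_forall_mem hk
    (LinearMap.ker X.mulVecLin) ?_ fun x hx => ?_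
  · have := X.mulVecLin.finrank_range_add_finrank_ker
    rw [Module.finrank_fintype_fun_eq_card] at this
    change X.rank + _ = _ at this
    omega
  · rw [dotProduct_conjTranspose_mul_self_mulVec]
    exact h x hx

lemma le_singularValue_succ_of_submatrix {m' n' : Type*} [Fintype m'] [Fintype n']
    (A : Matrix m n ℝ) {r : m' → m} {g : n' → n} (hr : Function.Injective r)
    (hg : Function.Injective g) {k : ℕ} (hk : Fintype.card n' = k + 1) {c : ℝ}
    (h : ∀ v, c ^ 2 * (v ⬝ᵥ v) ≤ (A.submatrix r g *ᵥ v) ⬝ᵥ (A.submatrix r g *ᵥ v)) :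
    c ≤ singularValue A (k + 1) := by
  have hkn : k < Fintype.card n := by have := Fintype.card_le_of_injective g hg; omega
  rw [singularValue_succ_eq_sqrt A hkn]
  refine Real.le_sqrt_of_sq_le <|
    (isHermitian_conjTranspose_mul_self A).le_eigenvalues₀_of_forall_mem hkn
      (LinearMap.range (Function.ExtendByZero.linearMap ℝ g)) ?_ ?_
  · rw [LinearMap.finrank_range_of_inj (Function.extend_injective hg (0 : n → ℝ)),
      Module.finrank_fintype_fun_eq_card, hk]
  · rintro _ ⟨v, rfl⟩
    set x := Function.ExtendByZero.linearMap ℝ g v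
    have hx : x = Function.extend g v 0 := rfl
    have hxx : x ⬝ᵥ x = v ⬝ᵥ v :=
      (Fintype.sum_of_injective g hg _ _ (fun j hj => by simp [hx, Function.extend_apply' _ _ _ hj])
        (fun j => by simp [hx, hg.extend_apply])).symm
    have hAx : ∀ i, (A *ᵥ x) (r i) = (A.submatrix r g *ᵥ v) i := fun i =>
      (Fintype.sum_of_injective g hg _ _ (fun j hj => by simp [hx, Function.extend_apply' _ _ _ hj])
        (fun j => by simp [hx, hg.extend_apply])).symm
    rw [dotProduct_conjTranspose_mul_self_mulVec, hxx]
    refine (h v).trans ?_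
    calc (A.submatrix r g *ᵥ v) ⬝ᵥ (A.submatrix r g *ᵥ v)
        = ∑ j ∈ Finset.univ.map ⟨r, hr⟩, (A *ᵥ x) j * (A *ᵥ x) j := by
          simp [dotProduct, hAx]
      _ ≤ (A *ᵥ x) ⬝ᵥ (A *ᵥ x) :=
          Finset.sum_le_univ_sum_of_nonneg fun j => mul_self_nonneg _

end SingularValues

lemma dotProduct_mulVec_self_le_of_abs_le {m n : Type*} [Fintype m] [Fintype n]
    (G : Matrix m n ℝ) {β : ℝ} (hG : ∀ i j, |G i j| ≤ β) (w : n → ℝ) :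
    (G *ᵥ w) ⬝ᵥ (G *ᵥ w) ≤ Fintype.card m * Fintype.card n * β ^ 2 * (w ⬝ᵥ w) := by
  have hrow : ∀ i, (G *ᵥ w) i * (G *ᵥ w) i ≤ Fintype.card n * β ^ 2 * (w ⬝ᵥ w) := fun i => by
    calc (G *ᵥ w) i * (G *ᵥ w) i = (∑ j, G i j * w j) ^ 2 := by rw [sq]; rfl
      _ ≤ (∑ j, G i j ^ 2) * ∑ j, w j ^ 2 := Finset.sum_mul_sq_le_sq_mul_sq _ _ _
      _ = (∑ j, G i j ^ 2) * (w ⬝ᵥ w) := by simp only [dotProduct, sq]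
      _ ≤ (∑ _j : n, β ^ 2) * (w ⬝ᵥ w) :=
          mul_le_mul_of_nonneg_right (Finset.sum_le_sum fun j _ => sq_le_sq' (abs_le.1 (hG i j)).1
            (abs_le.1 (hG i j)).2) (by simpa using dotProduct_star_self_nonneg w)
      _ = Fintype.card n * β ^ 2 * (w ⬝ᵥ w) := by simp
  calc (G *ᵥ w) ⬝ᵥ (G *ᵥ w) ≤ ∑ _i : m, Fintype.card n * β ^ 2 * (w ⬝ᵥ w) :=
        Finset.sum_le_sum fun i _ => hrow i
    _ = _ := by simp [mul_assoc]

lemma dotProduct_self_le_of_abs_nonsing_inv_le {κ : Type*} [Fintype κ] [DecidableEq κ]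
    {B : Matrix κ κ ℝ} (hB : IsUnit B.det) {β : ℝ} (h : ∀ i j, |B⁻¹ i j| ≤ β) (v : κ → ℝ) :
    v ⬝ᵥ v ≤ Fintype.card κ ^ 2 * β ^ 2 * ((B *ᵥ v) ⬝ᵥ (B *ᵥ v)) := by
  have := dotProduct_mulVec_self_le_of_abs_le B⁻¹ h (B *ᵥ v)
  rwa [mulVec_mulVec, nonsing_inv_mul _ hB, one_mulVec, ← sq] at this

lemma singularValue_one_le_of_abs_le {m n : Type*} [Fintype m] [Fintype n] [DecidableEq n]
    [Nonempty n] (G : Matrix m n ℝ) {β : ℝ} (hβ : 0 ≤ β) (hG : ∀ i j, |G i j| ≤ β) :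
    singularValue G 1 ≤ √(Fintype.card m * Fintype.card n) * β :=
  singularValue_succ_le_of_rank_le G 0 Fintype.card_pos (by simp) (by positivity) fun x _ => by
    rw [mul_pow, Real.sq_sqrt (by positivity)]
    exact dotProduct_mulVec_self_le_of_abs_le G hG x

lemma abs_adjugate_le_of_abs_det_submatrix_le {ι : Type*} [Fintype ι] [DecidableEq ι] {d : ℕ}
    (hd : Fintype.card ι = d + 1) (B : Matrix ι ι ℝ) {M : ℝ}
    (hB : ∀ r c : Fin d → ι, Function.Injective r → Function.Injective c →
      |(B.submatrix r c).det| ≤ M) (i j : ι) :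
    |B.adjugate i j| ≤ M := by
  set e := (Fintype.equivFinOfCardEq hd).symm
  have h := congrFun (congrFun (adjugate_submatrix_equiv_self e B) (e.symm i)) (e.symm j)
  simp only [submatrix_apply, Equiv.apply_symm_apply] at h
  rw [← h, adjugate_fin_succ_eq_det_submatrix, abs_mul, abs_pow, abs_neg, abs_one, one_pow,
    one_mul, submatrix_submatrix]
  exact hB _ _ (e.injective.comp (Fin.succAbove_right_injective))
    (e.injective.comp (Fin.succAbove_right_injective))

def borderedBlock {α l m n : Type*} (A₁₁ : Matrix l l α) (A₁₂ : Matrix l n α)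
    (A₂₁ : Matrix m l α) (A₂₂ : Matrix m n α) (p : m) (q : n) : Matrix (l ⊕ Unit) (l ⊕ Unit) α :=
  fromBlocks A₁₁ (of fun i (_ : Unit) => A₁₂ i q) (of fun (_ : Unit) j => A₂₁ p j)
    (of fun (_ : Unit) (_ : Unit) => A₂₂ p q)

lemma fromBlocks_submatrix_sumMap {α l m n : Type*} (A₁₁ : Matrix l l α) (A₁₂ : Matrix l n α)
    (A₂₁ : Matrix m l α) (A₂₂ : Matrix m n α) (p : m) (q : n) :
    (fromBlocks A₁₁ A₁₂ A₂₁ A₂₂).submatrix (Sum.map id fun _ : Unit => p)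
        (Sum.map id fun _ : Unit => q) = borderedBlock A₁₁ A₁₂ A₂₁ A₂₂ p q := by
  ext (i | i) (j | j) <;> rfl

section Schur

variable {l m n : Type*} [Fintype l] [DecidableEq l]
  (A₁₁ : Matrix l l ℝ) (A₁₂ : Matrix l n ℝ) (A₂₁ : Matrix m l ℝ) (A₂₂ : Matrix m n ℝ)

lemma det_borderedBlock (hA : IsUnit A₁₁.det) (p : m) (q : n) :
    (borderedBlock A₁₁ A₁₂ A₂₁ A₂₂ p q).det = A₁₁.det * (A₂₂ - A₂₁ * A₁₁⁻¹ * A₁₂) p q := by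
  have := A₁₁.invertibleOfIsUnitDet hA
  rw [borderedBlock, det_fromBlocks₁₁, det_unique (_ : Matrix Unit Unit ℝ), invOf_eq_nonsing_inv]
  simp [mul_apply]

lemma fromBlocks_sub_fromRows_mul_fromCols (hA : IsUnit A₁₁.det) :
    fromBlocks A₁₁ A₁₂ A₂₁ A₂₂ - fromRows (1 : Matrix l l ℝ) (A₂₁ * A₁₁⁻¹) * fromCols A₁₁ A₁₂ =
      fromBlocks 0 0 0 (A₂₂ - A₂₁ * A₁₁⁻¹ * A₁₂) := by
  rw [fromRows_mul_fromCols, Matrix.mul_assoc, nonsing_inv_mul _ hA, sub_eq_add_neg,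
    fromBlocks_neg, fromBlocks_add]
  simp [sub_eq_add_neg]

variable [Fintype m] [Fintype n] [DecidableEq n]

theorem singularValue_succ_le_singularValue_one_schur [Nonempty n] (hA : IsUnit A₁₁.det) :
    singularValue (fromBlocks A₁₁ A₁₂ A₂₁ A₂₂) (Fintype.card l + 1) ≤
      singularValue (A₂₂ - A₂₁ * A₁₁⁻¹ * A₁₂) 1 := by
  set S := A₂₂ - A₂₁ * A₁₁⁻¹ * A₁₂
  set X := fromRows (1 : Matrix l l ℝ) (A₂₁ * A₁₁⁻¹) * fromCols A₁₁ A₁₂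
  have hX : X.rank ≤ Fintype.card l := (rank_mul_le_right _ _).trans (rank_le_card_height _)
  refine singularValue_succ_le_of_rank_le _ X (by simpa using Fintype.card_pos) hX
    (singularValue_nonneg _ _) fun x hx => ?_
  have hAx : fromBlocks A₁₁ A₁₂ A₂₁ A₂₂ *ᵥ x = Sum.elim (0 : l → ℝ) (S *ᵥ (x ∘ Sum.inr)) := by
    rw [← sub_zero (fromBlocks A₁₁ A₁₂ A₂₁ A₂₂ *ᵥ x), ← hx, ← sub_mulVec,
      fromBlocks_sub_fromRows_mul_fromCols _ _ _ _ hA, fromBlocks_mulVec]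
    simp [S]
  rw [hAx, ← Sum.elim_comp_inl_inr x, sumElim_dotProduct_sumElim, sumElim_dotProduct_sumElim,
    zero_dotProduct, zero_add, Sum.elim_comp_inl_inr]
  calc (S *ᵥ (x ∘ Sum.inr)) ⬝ᵥ (S *ᵥ (x ∘ Sum.inr))
      ≤ singularValue S 1 ^ 2 * ((x ∘ Sum.inr) ⬝ᵥ (x ∘ Sum.inr)) :=
        dotProduct_mulVec_self_le_singularValue_one_sq S _
    _ ≤ singularValue S 1 ^ 2 *
          ((x ∘ Sum.inl) ⬝ᵥ (x ∘ Sum.inl) + (x ∘ Sum.inr) ⬝ᵥ (x ∘ Sum.inr)) := by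
        gcongr
        exact le_add_of_nonneg_left (by simpa using dotProduct_star_self_nonneg (x ∘ Sum.inl))

theorem abs_schur_apply_le (hA : IsUnit A₁₁.det) {ρ : ℝ} (hρ : 0 < ρ) (p : m) (q : n)
    (hadj : ∀ i j, |(borderedBlock A₁₁ A₁₂ A₂₁ A₂₂ p q).adjugate i j| ≤ ρ * |A₁₁.det|) :
    |(A₂₂ - A₂₁ * A₁₁⁻¹ * A₁₂) p q| ≤ ρ * (Fintype.card l + 1) *
      singularValue (fromBlocks A₁₁ A₁₂ A₂₁ A₂₂) (Fintype.card l + 1) := by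
  set B := borderedBlock A₁₁ A₁₂ A₂₁ A₂₂ p q
  set s := (A₂₂ - A₂₁ * A₁₁⁻¹ * A₁₂) p q
  set K : ℝ := Fintype.card l + 1
  have hK : 0 < K := by positivity
  rcases eq_or_ne s 0 with hs | hs
  · rw [hs, abs_zero]
    exact mul_nonneg (by positivity) (singularValue_nonneg _ _)
  have hdetB : B.det = A₁₁.det * s := det_borderedBlock A₁₁ A₁₂ A₂₁ A₂₂ hA p q
  have hd : A₁₁.det ≠ 0 := hA.ne_zero
  have hBinv : ∀ i j, |B⁻¹ i j| ≤ ρ / |s| := fun i j => by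
    rw [inv_def, Ring.inverse_eq_inv, Matrix.smul_apply, smul_eq_mul, abs_mul, abs_inv, hdetB,
      abs_mul]
    calc (|A₁₁.det| * |s|)⁻¹ * |B.adjugate i j| ≤ (|A₁₁.det| * |s|)⁻¹ * (ρ * |A₁₁.det|) := by
          gcongr
          exact hadj i j
      _ = ρ / |s| := by field_simp
  have hv : ∀ v, v ⬝ᵥ v ≤ K ^ 2 * (ρ / |s|) ^ 2 * ((B *ᵥ v) ⬝ᵥ (B *ᵥ v)) := by
    simpa [K] using dotProduct_self_le_of_abs_nonsing_inv_le
      (by rw [hdetB]; exact (mul_ne_zero hd hs).isUnit) hBinv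
  have hσ : |s| / (ρ * K) ≤ singularValue (fromBlocks A₁₁ A₁₂ A₂₁ A₂₂) (Fintype.card l + 1) := by
    refine le_singularValue_succ_of_submatrix (r := Sum.map id fun _ : Unit => p)
      (g := Sum.map id fun _ : Unit => q) _
      (Function.injective_id.sumMap fun _ _ _ => Subsingleton.elim _ _)
      (Function.injective_id.sumMap fun _ _ _ => Subsingleton.elim _ _) (by simp) fun v => ?_
    rw [fromBlocks_submatrix_sumMap]
    calc (|s| / (ρ * K)) ^ 2 * (v ⬝ᵥ v)
        ≤ (|s| / (ρ * K)) ^ 2 * (K ^ 2 * (ρ / |s|) ^ 2 * ((B *ᵥ v) ⬝ᵥ (B *ᵥ v))) := by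
          gcongr
          exact hv v
      _ = (B *ᵥ v) ⬝ᵥ (B *ᵥ v) := by field_simp
  calc |s| = ρ * K * (|s| / (ρ * K)) := by field_simp
    _ ≤ _ := by gcongr

end Schur

theorem schur_spectral_bounds_of_local_maxvol_general {k m₂ n₂ : ℕ} (hn : 0 < n₂)

    (A₁₁ : Matrix (Fin k) (Fin k) ℝ) (A₁₂ : Matrix (Fin k) (Fin n₂) ℝ)
    (A₂₁ : Matrix (Fin m₂) (Fin k) ℝ) (A₂₂ : Matrix (Fin m₂) (Fin n₂) ℝ)
    (hA : IsUnit A₁₁.det) (ρ : ℝ) (hρ : 1 ≤ ρ)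
    (hloc : ∀ (p : Fin m₂) (q : Fin n₂) (r c : Fin k → Fin k ⊕ Unit),
      Function.Injective r → Function.Injective c →
      |((Matrix.fromBlocks A₁₁ (Matrix.of fun i (_ : Unit) => A₁₂ i q)
          (Matrix.of fun (_ : Unit) j => A₂₁ p j)
          (Matrix.of fun (_ : Unit) (_ : Unit) => A₂₂ p q)).submatrix r c).det|
        ≤ ρ * |A₁₁.det|) :
    singularValue (Matrix.fromBlocks A₁₁ A₁₂ A₂₁ A₂₂) (k + 1) ≤
      singularValue (A₂₂ - A₂₁ * A₁₁⁻¹ * A₁₂) 1 ∧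
    singularValue (A₂₂ - A₂₁ * A₁₁⁻¹ * A₁₂) 1 ≤
      ρ * (k + 1) * Real.sqrt ((m₂ : ℝ) * (n₂ : ℝ)) *
        singularValue (Matrix.fromBlocks A₁₁ A₁₂ A₂₁ A₂₂) (k + 1) := by
  have : Nonempty (Fin n₂) := Fin.pos_iff_nonempty.1 hn
  have hσ := singularValue_succ_le_singularValue_one_schur A₁₁ A₁₂ A₂₁ A₂₂ hA
  have hentry := fun p q => abs_schur_apply_le A₁₁ A₁₂ A₂₁ A₂₂ hA (by linarith) p q
    (abs_adjugate_le_of_abs_det_submatrix_le (by simp) _ (hloc p q))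
  simp only [Fintype.card_fin] at hσ hentry
  refine ⟨hσ, ?_⟩
  have hS := singularValue_one_le_of_abs_le _
    (mul_nonneg (by positivity) (singularValue_nonneg _ _)) hentry
  simp only [Fintype.card_fin] at hS
  exact hS.trans_eq (by ring)

/-- Let `A = [[A₁₁, A₁₂], [A₂₁, A₂₂]]` be an `m × n` real matrix with `A₁₁` a nonsingular
`k × k` block, `k < min(m,n)`, having local `ρ`-maximum volume in `A` for some `ρ ≥ 1`.
Then `σ_{k+1}(A) ≤ ‖A/A₁₁‖₂ ≤ ρ (k+1) √((m−k)(n−k)) σ_{k+1}(A)`, where `‖·‖₂` is the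
spectral norm (the largest singular value). -/
theorem schur_spectral_bounds_of_local_maxvol {k m₂ n₂ : ℕ} (hm : 0 < m₂) (hn : 0 < n₂)

    (A₁₁ : Matrix (Fin k) (Fin k) ℝ) (A₁₂ : Matrix (Fin k) (Fin n₂) ℝ)
    (A₂₁ : Matrix (Fin m₂) (Fin k) ℝ) (A₂₂ : Matrix (Fin m₂) (Fin n₂) ℝ)
    (hA : IsUnit A₁₁.det) (ρ : ℝ) (hρ : 1 ≤ ρ)
    (hloc : ∀ (p : Fin m₂) (q : Fin n₂) (r c : Fin k → Fin k ⊕ Unit),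
      Function.Injective r → Function.Injective c →
      |((Matrix.fromBlocks A₁₁ (Matrix.of fun i (_ : Unit) => A₁₂ i q)
          (Matrix.of fun (_ : Unit) j => A₂₁ p j)
          (Matrix.of fun (_ : Unit) (_ : Unit) => A₂₂ p q)).submatrix r c).det|
        ≤ ρ * |A₁₁.det|) :
    singularValue (Matrix.fromBlocks A₁₁ A₁₂ A₂₁ A₂₂) (k + 1) ≤
      singularValue (A₂₂ - A₂₁ * A₁₁⁻¹ * A₁₂) 1 ∧
    singularValue (A₂₂ - A₂₁ * A₁₁⁻¹ * A₁₂) 1 ≤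
      ρ * (k + 1) * Real.sqrt ((m₂ : ℝ) * (n₂ : ℝ)) *
        singularValue (Matrix.fromBlocks A₁₁ A₁₂ A₂₁ A₂₂) (k + 1) :=
  schur_spectral_bounds_of_local_maxvol_general hn A₁₁ A₁₂ A₂₁ A₂₂ hA ρ hρ hloc
end
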